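/- arXiv:0811.3928 — 2 statements merged into one kernel-verified Lean document; each statement's English description precedes it below -/
import Mathlib

section
/- Let Ω ⊆ ℝ² be open, let a, b : Ω → ℝ be differentiable at x₀ ∈ Ω, set c := 1 − a, and assume b² = a·c on Ω. Let P := ((a, b), (b, c)) and assume P(x₀) div P(x₀) = 0. Write f := ∂₁a + ∂₂b and g := ∂₁b + ∂₂c (evaluated at x₀), so that div P(x₀) = (f, g). Then at x₀ the partial derivatives of a satisfy the linear system (1/2 − a) ∂₁a − b ∂₂a = −a f and b ∂₁a + (1/2 − a) ∂₂a = (a − 1) g, and consequently |∇a(x₀)| ≤ 2 √(f² + g²) = 2 |div P(x₀)|. -/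
/-!
Differentiating `b² = a (1 - a)` gives `2 b ∇b = (1 - 2a) ∇a`, which lets one eliminate `∇b` from
the two scalar equations `a f + b g = 0` and `b f + (1 - a) g = 0` encoded by `P div P = 0`. What is
left is a linear system for `∇a` whose coefficient matrix `((1/2 - a, -b), (b, 1/2 - a))` is half a
rotation, since `(1/2 - a)² + b² = 1/4`; hence `|∇a| = 2 |(a f, (a - 1) g)| ≤ 2 |(f, g)|`, using
`0 ≤ a ≤ 1`.
-/

open Matrix

noncomputable section

/-- Partial derivative `∂_{x_j} f` of a scalar field on `ℝ²`. -/
def pd (j : Fin 2) (f : (Fin 2 → ℝ) → ℝ) (x : Fin 2 → ℝ) : ℝ :=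
  fderiv ℝ f x (Pi.single j 1)

/-- Divergence of a matrix field: `(div P)_i = ∂_{x₁} P_{i1} + ∂_{x₂} P_{i2}`. -/
def matDiv (P : (Fin 2 → ℝ) → Matrix (Fin 2) (Fin 2) ℝ) (x : Fin 2 → ℝ) :
    Fin 2 → ℝ :=
  fun i => pd 0 (fun y => P y i 0) x + pd 1 (fun y => P y i 1) x

open Filter Topology

theorem fderiv_eq_of_sq_eventuallyEq_mul_one_sub {E : Type*} [NormedAddCommGroup E]
    [NormedSpace ℝ E] {a b : E → ℝ} {x : E} (ha : DifferentiableAt ℝ a x)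
    (hb : DifferentiableAt ℝ b x) (h : (fun y => b y ^ 2) =ᶠ[𝓝 x] fun y => a y * (1 - a y)) :
    (2 * b x) • fderiv ℝ b x = (1 - 2 * a x) • fderiv ℝ a x := by
  have hsq := (hb.hasFDerivAt.pow 2).congr_of_eventuallyEq h.symm
  have hprod := ha.hasFDerivAt.mul (ha.hasFDerivAt.const_sub 1)
  ext v
  have hv := congrArg (· v) (hsq.unique hprod)
  simp only [Nat.add_one_sub_one, pow_one, nsmul_eq_mul, Nat.cast_ofNat, _root_.smul_apply,
    smul_eq_mul, _root_.add_apply, _root_.neg_apply] at hv ⊢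
  linear_combination hv

theorem pd_const_sub (j : Fin 2) (a : (Fin 2 → ℝ) → ℝ) (x : Fin 2 → ℝ) (r : ℝ) :
    pd j (fun y => r - a y) x = -pd j a x := by
  rw [pd, fderiv_const_sub]
  rfl

theorem matDiv_eq_of_symm {P : (Fin 2 → ℝ) → Matrix (Fin 2) (Fin 2) ℝ}
    {a b c : (Fin 2 → ℝ) → ℝ} (hP : ∀ y, P y = !![a y, b y; b y, c y]) (x : Fin 2 → ℝ) :
    matDiv P x = ![pd 0 a x + pd 1 b x, pd 0 b x + pd 1 c x] := by
  obtain rfl : P = fun y => !![a y, b y; b y, c y] := funext hP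
  ext i
  fin_cases i <;> rfl

theorem mulVec_eq_zero_iff_fin_two {a b c d f g : ℝ} :
    !![a, b; c, d] *ᵥ ![f, g] = 0 ↔ a * f + b * g = 0 ∧ c * f + d * g = 0 := by
  simp [funext_iff, Fin.forall_fin_two, mul_comm]

theorem linear_system_of_mulVec_div_eq_zero {a b p q r s f g : ℝ}
    (hfg : a * f + b * g = 0 ∧ b * f + (1 - a) * g = 0) (hf : f = p + s) (hg : g = r - q)
    (hr : 2 * b * r = (1 - 2 * a) * p) (hs : 2 * b * s = (1 - 2 * a) * q) :
    (1 / 2 - a) * p - b * q = -a * f ∧ b * p + (1 / 2 - a) * q = (a - 1) * g := by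
  obtain ⟨h₁, h₂⟩ := hfg
  constructor
  · linear_combination h₁ - b * hg - hr / 2
  · linear_combination h₂ - b * hf - hs / 2

theorem sqrt_sq_add_sq_le_two_mul_sqrt {a b p q f g : ℝ} (hb : b ^ 2 = a * (1 - a))
    (h₁ : (1 / 2 - a) * p - b * q = -a * f) (h₂ : b * p + (1 / 2 - a) * q = (a - 1) * g) :
    √(p ^ 2 + q ^ 2) ≤ 2 * √(f ^ 2 + g ^ 2) := by
  have hpq : p ^ 2 + q ^ 2 = 2 ^ 2 * ((a * f) ^ 2 + ((a - 1) * g) ^ 2) := by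
    linear_combination (4 * ((1 / 2 - a) * p - b * q) - 4 * a * f) * h₁
      + (4 * (b * p + (1 / 2 - a) * q) + 4 * (a - 1) * g) * h₂ - 4 * (p ^ 2 + q ^ 2) * hb
  have ha₀ : 0 ≤ a := by nlinarith [sq_nonneg b]
  have ha₁ : a ≤ 1 := by nlinarith [sq_nonneg b]
  have hle : (a * f) ^ 2 + ((a - 1) * g) ^ 2 ≤ f ^ 2 + g ^ 2 := by
    rw [mul_pow, mul_pow]
    gcongr
    · nlinarith
    · nlinarith
  calc √(p ^ 2 + q ^ 2) = 2 * √((a * f) ^ 2 + ((a - 1) * g) ^ 2) := by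
        rw [hpq, Real.sqrt_mul' _ (by positivity), Real.sqrt_sq zero_le_two]
    _ ≤ 2 * √(f ^ 2 + g ^ 2) := by gcongr

/-- Let `Ω ⊆ ℝ²` be open, `a, b : Ω → ℝ` differentiable at `x₀ ∈ Ω`, `c := 1 - a`,
`b² = a·c` on `Ω`, `P := ((a,b),(b,c))`, and `P(x₀) div P(x₀) = 0`. With
`f := ∂₁a + ∂₂b` and `g := ∂₁b + ∂₂c` at `x₀` (so that `div P(x₀) = (f,g)`),
the partial derivatives of `a` at `x₀` satisfy the linear system
`(1/2 − a) ∂₁a − b ∂₂a = −a f` and `b ∂₁a + (1/2 − a) ∂₂a = (a − 1) g`,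
and consequently `|∇a(x₀)| ≤ 2 √(f² + g²) = 2 |div P(x₀)|`. -/
theorem stmt4 (Ω : Set (Fin 2 → ℝ)) (hΩ : IsOpen Ω)
    (a b c : (Fin 2 → ℝ) → ℝ) (x₀ : Fin 2 → ℝ) (hx₀ : x₀ ∈ Ω)
    (ha : DifferentiableAt ℝ a x₀) (hb : DifferentiableAt ℝ b x₀)
    (hc : c = fun y => 1 - a y)
    (hbc : ∀ y ∈ Ω, (b y) ^ 2 = a y * c y)
    (P : (Fin 2 → ℝ) → Matrix (Fin 2) (Fin 2) ℝ)
    (hP : ∀ y, P y = !![a y, b y; b y, c y])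
    (hPdiv : (P x₀) *ᵥ (matDiv P x₀) = 0)
    (f g : ℝ)
    (hf : f = pd 0 a x₀ + pd 1 b x₀)
    (hg : g = pd 0 b x₀ + pd 1 c x₀) :
    matDiv P x₀ = ![f, g] ∧
    (1 / 2 - a x₀) * pd 0 a x₀ - b x₀ * pd 1 a x₀ = -(a x₀) * f ∧
    b x₀ * pd 0 a x₀ + (1 / 2 - a x₀) * pd 1 a x₀ = (a x₀ - 1) * g ∧
    Real.sqrt ((pd 0 a x₀) ^ 2 + (pd 1 a x₀) ^ 2) ≤
      2 * Real.sqrt (f ^ 2 + g ^ 2) := by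
  subst hc
  have hdiv : matDiv P x₀ = ![f, g] := by rw [matDiv_eq_of_symm hP, hf, hg]
  have hfg := mulVec_eq_zero_iff_fin_two.mp (hdiv ▸ hP x₀ ▸ hPdiv)
  have hder := fderiv_eq_of_sq_eventuallyEq_mul_one_sub ha hb
    (eventually_of_mem (hΩ.mem_nhds hx₀) hbc)
  have hpd (j : Fin 2) : 2 * b x₀ * pd j b x₀ = (1 - 2 * a x₀) * pd j a x₀ :=
    congrArg (· (Pi.single j 1)) hder
  obtain ⟨h₁, h₂⟩ := linear_system_of_mulVec_div_eq_zero hfg hf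
    (hg.trans (by rw [pd_const_sub]; ring)) (hpd 0) (hpd 1)
  exact ⟨hdiv, h₁, h₂, sqrt_sq_add_sq_le_two_mul_sqrt (hbc x₀ hx₀) h₁ h₂⟩
end
end

section
/- Let Ω ⊆ ℝ² be open and let P : Ω → ℝ^{2×2} be continuously differentiable on Ω, such that for every x ∈ Ω the matrix P(x) is symmetric, P(x)² = P(x), trace P(x) = 1, and P(x) div P(x) = 0. Let x₀, x₁ ∈ Ω be such that the closed line segment L from x₀ to x₁ is contained in Ω and P(x₀)(x₁ − x₀) = 0. Then P(y) = P(x₀) for every y ∈ L. -/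
/-!
Write `P = [[p, q], [q, 1 - p]]` with `p - p² = q²`. Differentiating this constraint and combining
it with `P div P = 0` shows that the gradients of `p` and `q` lie in the range of `P`, i.e.
`DP(z) w = DP(z) (P(z) w)`: to first order, `P` does not vary in the direction normal to its line.
With `v = x₁ - x₀` and `P(x₀) v = 0` this gives `DP(z) v = DP(z) ((P(z) - P(x₀)) v)`, so
`t ↦ P(x₀ + t v) - P(x₀)` has derivative bounded by a multiple of its norm and vanishes at `0`;
Grönwall's inequality makes it vanish on `[0, 1]`.
-/

open Matrix

noncomputable section

attribute [local instance] Matrix.normedAddCommGroup Matrix.normedSpace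

lemma apply_mulVec_eq_of_mulVec_grad_eq {n : Type*} [Fintype n] [DecidableEq n]
    (ℓ : (n → ℝ) →L[ℝ] ℝ) {A : Matrix n n ℝ} (hA : A.IsSymm)
    (h : A *ᵥ (fun j => ℓ (Pi.single j 1)) = fun j => ℓ (Pi.single j 1)) (w : n → ℝ) :
    ℓ (A *ᵥ w) = ℓ w := by
  have hℓ : ∀ u : n → ℝ, ℓ u = u ⬝ᵥ fun j => ℓ (Pi.single j 1) := fun u => by
    conv_lhs => rw [← Finset.univ_sum_single u]
    simp only [map_sum, dotProduct]
    refine Finset.sum_congr rfl fun j _ => ?_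
    rw [← smul_eq_mul, ← map_smul, ← Pi.single_smul', smul_eq_mul, mul_one]
  rw [hℓ (A *ᵥ w), hℓ w, dotProduct_comm, dotProduct_mulVec, ← mulVec_transpose, hA.eq, h,
    dotProduct_comm]

lemma norm_mulVec_le {m n α : Type*} [Fintype m] [Fintype n] [NonUnitalNormedRing α]
    (A : Matrix m n α) (v : n → α) : ‖A *ᵥ v‖ ≤ Fintype.card n * ‖A‖ * ‖v‖ := by
  refine (pi_norm_le_iff_of_nonneg (by positivity)).2 fun i => ?_
  calc ‖(A *ᵥ v) i‖ ≤ ∑ j, ‖A i j * v j‖ := norm_sum_le _ _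
    _ ≤ ∑ _j : n, ‖A‖ * ‖v‖ := Finset.sum_le_sum fun j _ => (norm_mul_le _ _).trans <|
        mul_le_mul (norm_entry_le_entrywise_sup_norm A) (norm_le_pi_norm v j)
          (norm_nonneg _) (norm_nonneg _)
    _ = Fintype.card n * ‖A‖ * ‖v‖ := by simp [mul_assoc]

section Calculus

variable {E : Type*} [NormedAddCommGroup E] [NormedSpace ℝ E]

lemma fderiv_smul_eq_of_sub_sq_eventuallyEq {f g : E → ℝ} {z : E}
    (hf : DifferentiableAt ℝ f z) (hg : DifferentiableAt ℝ g z)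
    (h : (fun y => f y - f y ^ 2) =ᶠ[nhds z] fun y => g y ^ 2) :
    (1 - 2 * f z) • fderiv ℝ f z = (2 * g z) • fderiv ℝ g z := by
  have hl := hf.hasFDerivAt.sub (hf.hasFDerivAt.pow 2)
  have hr := (hg.hasFDerivAt.pow 2).congr_of_eventuallyEq h
  ext w
  have := congrArg (· w) (hl.unique hr)
  simp only [_root_.sub_apply, _root_.smul_apply, nsmul_eq_mul,
    smul_eq_mul] at this ⊢
  linear_combination this

lemma fderiv_matrix_apply {m n : Type*} [Fintype m] [Fintype n] {P : E → Matrix m n ℝ} {z : E}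
    (hP : DifferentiableAt ℝ P z) (w : E) (i : m) (j : n) :
    fderiv ℝ P z w i j = fderiv ℝ (fun y => P y i j) z w := by
  rw [fderiv_apply (differentiableAt_pi.1 hP i) j, fderiv_apply hP i]
  rfl

lemma contDiffOn_matrix {m n : Type*} [Fintype m] [Fintype n] {P : E → Matrix m n ℝ} {s : Set E}
    {k : WithTop ℕ∞} (h : ∀ i j, ContDiffOn ℝ k (fun y => P y i j) s) : ContDiffOn ℝ k P s :=
  contDiffOn_pi.2 fun i => contDiffOn_pi.2 (h i)

lemma eqOn_segment_of_norm_fderiv_le {F : Type*} [NormedAddCommGroup F] [NormedSpace ℝ F]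
    {g : E → F} {x₀ x₁ : E} {K : ℝ} (hg : ∀ z ∈ segment ℝ x₀ x₁, DifferentiableAt ℝ g z)
    (hK : ∀ z ∈ segment ℝ x₀ x₁, ‖fderiv ℝ g z (x₁ - x₀)‖ ≤ K * ‖g z - g x₀‖) :
    ∀ y ∈ segment ℝ x₀ x₁, g y = g x₀ := by
  set γ : ℝ →ᵃ[ℝ] E := AffineMap.lineMap x₀ x₁
  have hγ : ∀ t ∈ Set.Icc (0 : ℝ) 1, γ t ∈ segment ℝ x₀ x₁ := fun t ht => by
    rw [segment_eq_image_lineMap]; exact ⟨t, ht, rfl⟩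
  have hderiv : ∀ t ∈ Set.Icc (0 : ℝ) 1,
      HasDerivAt (fun t => g (γ t) - g x₀) (fderiv ℝ g (γ t) (x₁ - x₀)) t := fun t ht =>
    ((hg _ (hγ t ht)).hasFDerivAt.comp_hasDerivAt t AffineMap.hasDerivAt_lineMap).sub_const _
  have hzero := eq_zero_of_abs_deriv_le_mul_abs_self_of_eq_zero_right (K := K)
    (fun t ht => (hderiv t ht).continuousAt.continuousWithinAt)
    (fun t ht => (hderiv t (Set.Ico_subset_Icc_self ht)).hasDerivWithinAt)
    (by simp [γ]) (fun t ht => hK _ (hγ t (Set.Ico_subset_Icc_self ht)))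
  rw [segment_eq_image_lineMap]
  rintro _ ⟨t, ht, rfl⟩
  exact sub_eq_zero.1 (hzero t ht)

end Calculus

structure IsRankOneProj (A : Matrix (Fin 2) (Fin 2) ℝ) : Prop where
  isSymm : A.IsSymm
  mul_self : A * A = A
  trace_eq_one : A.trace = 1

namespace IsRankOneProj

variable {A : Matrix (Fin 2) (Fin 2) ℝ}

lemma apply_one_zero (hA : IsRankOneProj A) : A 1 0 = A 0 1 := hA.isSymm.apply 0 1

lemma apply_one_one (hA : IsRankOneProj A) : A 1 1 = 1 - A 0 0 := by
  have := hA.trace_eq_one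
  rw [trace_fin_two] at this
  linarith

lemma sub_sq_eq_sq (hA : IsRankOneProj A) : A 0 0 - A 0 0 ^ 2 = A 0 1 ^ 2 := by
  have h := congrFun₂ hA.mul_self 0 0
  rw [mul_apply, Fin.sum_univ_two, hA.apply_one_zero] at h
  linear_combination -h

lemma eta (hA : IsRankOneProj A) : A = !![A 0 0, A 0 1; A 0 1, 1 - A 0 0] := by
  conv_lhs => rw [eta_fin_two A]
  rw [hA.apply_one_zero, hA.apply_one_one]

end IsRankOneProj

/-- `a` and `b` stand for `∇p` and `∇q`: `hab` is the derivative of the constraint `p - p² = q²`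
and `hdiv` is `P div P = 0` for `P = [[p, q], [q, 1 - p]]`. -/
lemma mulVec_eq_self_of_eikonal_fin_two {p q : ℝ} {a b : Fin 2 → ℝ} (hpq : p - p ^ 2 = q ^ 2)
    (hab : (1 - 2 * p) • a = (2 * q) • b)
    (hdiv : !![p, q; q, 1 - p] *ᵥ ![a 0 + b 1, b 0 - a 1] = 0) :
    !![p, q; q, 1 - p] *ᵥ a = a ∧ !![p, q; q, 1 - p] *ᵥ b = b := by
  have ha0 := congrFun hab 0
  have ha1 := congrFun hab 1
  have hd0 := congrFun hdiv 0
  have hd1 := congrFun hdiv 1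
  simp only [Pi.smul_apply, smul_eq_mul, mulVec, dotProduct, Fin.sum_univ_two, of_apply, cons_val',
    cons_val_zero, cons_val_one, empty_val', cons_val_fin_one, Pi.zero_apply] at ha0 ha1 hd0 hd1
  refine ⟨funext fun i => ?_, funext fun i => ?_⟩ <;> fin_cases i <;>
    simp only [mulVec, dotProduct, Fin.zero_eta, Fin.mk_one, Fin.isValue, of_apply, cons_val',
      cons_val_fin_one, cons_val_zero, cons_val_one, Fin.sum_univ_two]
  · linear_combination (2 * b 1) * hpq + (p - 1) * ha0 - q * ha1 + (2 * p - 2) * hd0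
  · linear_combination (-2 * a 1) * hpq + q * ha0 + p * ha1 + 2 * q * hd0
  · linear_combination (-2 * a 1) * hpq + q * ha0 + (p - 1) * ha1 + 2 * q * hd0 - hd1
  · linear_combination (-2 * b 1) * hpq - p * ha0 + q * ha1 + (1 - 2 * p) * hd0

def grad (f : (Fin 2 → ℝ) → ℝ) (z : Fin 2 → ℝ) : Fin 2 → ℝ := fun j => pd j f z

section ProjectionField

variable {P : (Fin 2 → ℝ) → Matrix (Fin 2) (Fin 2) ℝ} {z : Fin 2 → ℝ}

lemma matDiv_eq (h10 : (fun y => P y 1 0) =ᶠ[nhds z] fun y => P y 0 1)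
    (h11 : (fun y => P y 1 1) =ᶠ[nhds z] fun y => 1 - P y 0 0) :
    matDiv P z = ![grad (fun y => P y 0 0) z 0 + grad (fun y => P y 0 1) z 1,
      grad (fun y => P y 0 1) z 0 - grad (fun y => P y 0 0) z 1] := by
  ext i
  fin_cases i
  · rfl
  · simp [matDiv, grad, pd, h10.fderiv_eq, h11.fderiv_eq, sub_eq_add_neg]

lemma mulVec_grad_eq_grad_of_mulVec_matDiv_eq_zero (hP : ∀ᶠ y in nhds z, IsRankOneProj (P y))
    (h00 : DifferentiableAt ℝ (fun y => P y 0 0) z)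
    (h01 : DifferentiableAt ℝ (fun y => P y 0 1) z) (heik : P z *ᵥ matDiv P z = 0) :
    P z *ᵥ grad (fun y => P y 0 0) z = grad (fun y => P y 0 0) z ∧
      P z *ᵥ grad (fun y => P y 0 1) z = grad (fun y => P y 0 1) z := by
  have hPz := hP.self_of_nhds
  have hlin : (1 - 2 * P z 0 0) • grad (fun y => P y 0 0) z =
      (2 * P z 0 1) • grad (fun y => P y 0 1) z := by
    have h := fderiv_smul_eq_of_sub_sq_eventuallyEq h00 h01 (hP.mono fun y hy => hy.sub_sq_eq_sq)
    ext j
    simpa [grad, pd] using congrArg (· (Pi.single j 1)) h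
  have h10 : (fun y => P y 1 0) =ᶠ[nhds z] fun y => P y 0 1 :=
    hP.mono fun y hy => hy.apply_one_zero
  have h11 : (fun y => P y 1 1) =ᶠ[nhds z] fun y => 1 - P y 0 0 :=
    hP.mono fun y hy => hy.apply_one_one
  rw [matDiv_eq h10 h11, hPz.eta] at heik
  rw [hPz.eta]
  exact mulVec_eq_self_of_eikonal_fin_two hPz.sub_sq_eq_sq hlin heik

lemma fderiv_apply_mulVec_eq (hP : ∀ᶠ y in nhds z, IsRankOneProj (P y))
    (hd : DifferentiableAt ℝ P z) (heik : P z *ᵥ matDiv P z = 0) (w : Fin 2 → ℝ) :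
    fderiv ℝ P z (P z *ᵥ w) = fderiv ℝ P z w := by
  have hentry : ∀ i j, DifferentiableAt ℝ (fun y => P y i j) z := fun i j =>
    differentiableAt_pi.1 (differentiableAt_pi.1 hd i) j
  obtain ⟨hp, hq⟩ :=
    mulVec_grad_eq_grad_of_mulVec_matDiv_eq_zero hP (hentry 0 0) (hentry 0 1) heik
  have hsymm := hP.self_of_nhds.isSymm
  have hp' := apply_mulVec_eq_of_mulVec_grad_eq (fderiv ℝ (fun y => P y 0 0) z) hsymm hp w
  have hq' := apply_mulVec_eq_of_mulVec_grad_eq (fderiv ℝ (fun y => P y 0 1) z) hsymm hq w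
  have h10 : (fun y => P y 1 0) =ᶠ[nhds z] fun y => P y 0 1 :=
    hP.mono fun y hy => hy.apply_one_zero
  have h11 : (fun y => P y 1 1) =ᶠ[nhds z] fun y => 1 - P y 0 0 :=
    hP.mono fun y hy => hy.apply_one_one
  ext i j
  rw [fderiv_matrix_apply hd, fderiv_matrix_apply hd]
  fin_cases i <;> fin_cases j
  · exact hp'
  · exact hq'
  · simpa [h10.fderiv_eq] using hq'
  · simpa [h11.fderiv_eq, fderiv_const_sub] using hp'

end ProjectionField

/-- Let `Ω ⊆ ℝ²` be open and `P : Ω → ℝ^{2×2}` continuously differentiable, with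
`P(x)` a rank-one orthogonal projection (symmetric, `P² = P`, `trace P = 1`) and
`P(x) div P(x) = 0` for every `x ∈ Ω`. If the closed segment `L` from `x₀` to `x₁`
lies in `Ω` and `P(x₀)(x₁ − x₀) = 0`, then `P(y) = P(x₀)` for every `y ∈ L`. -/
theorem stmt5 (Ω : Set (Fin 2 → ℝ)) (hΩ : IsOpen Ω)
    (P : (Fin 2 → ℝ) → Matrix (Fin 2) (Fin 2) ℝ)
    (hC1 : ∀ i j, ContDiffOn ℝ 1 (fun y => P y i j) Ω)
    (hsymm : ∀ x ∈ Ω, (P x).IsSymm)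
    (hproj : ∀ x ∈ Ω, P x * P x = P x)
    (htr : ∀ x ∈ Ω, (P x).trace = 1)
    (heik : ∀ x ∈ Ω, (P x) *ᵥ (matDiv P x) = 0)
    (x₀ x₁ : Fin 2 → ℝ)
    (hseg : segment ℝ x₀ x₁ ⊆ Ω)
    (horth : (P x₀) *ᵥ (x₁ - x₀) = 0) :
    ∀ y ∈ segment ℝ x₀ x₁, P y = P x₀ := by
  have hP : ContDiffOn ℝ 1 P Ω := contDiffOn_matrix hC1
  have hdiff : ∀ z ∈ Ω, DifferentiableAt ℝ P z := fun z hz =>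
    (hP.contDiffAt (hΩ.mem_nhds hz)).differentiableAt one_ne_zero
  have hrank : ∀ z ∈ Ω, ∀ᶠ y in nhds z, IsRankOneProj (P y) := fun z hz =>
    Filter.eventually_of_mem (hΩ.mem_nhds hz) fun y hy => ⟨hsymm y hy, hproj y hy, htr y hy⟩
  have hcpt : IsCompact (segment ℝ x₀ x₁) :=
    convexHull_pair (𝕜 := ℝ) x₀ x₁ ▸ (Set.toFinite _).isCompact_convexHull ℝ
  obtain ⟨M, hM⟩ := hcpt.exists_bound_of_continuousOn
    ((hP.continuousOn_fderiv_of_isOpen hΩ le_rfl).mono hseg)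
  refine eqOn_segment_of_norm_fderiv_le (K := M * (2 * ‖x₁ - x₀‖))
    (fun z hz => hdiff z (hseg hz)) fun z hz => ?_
  have hM0 : 0 ≤ M := (norm_nonneg _).trans (hM z hz)
  have hfix := fderiv_apply_mulVec_eq (hrank z (hseg hz)) (hdiff z (hseg hz)) (heik z (hseg hz))
    (x₁ - x₀)
  calc ‖fderiv ℝ P z (x₁ - x₀)‖ = ‖fderiv ℝ P z ((P z - P x₀) *ᵥ (x₁ - x₀))‖ := by
        rw [sub_mulVec, horth, sub_zero, hfix]
    _ ≤ M * ‖(P z - P x₀) *ᵥ (x₁ - x₀)‖ := (ContinuousLinearMap.le_opNorm _ _).trans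
        (mul_le_mul_of_nonneg_right (hM z hz) (norm_nonneg _))
    _ ≤ M * (2 * ‖P z - P x₀‖ * ‖x₁ - x₀‖) := by
        gcongr
        simpa using norm_mulVec_le (P z - P x₀) (x₁ - x₀)
    _ = M * (2 * ‖x₁ - x₀‖) * ‖P z - P x₀‖ := by ring
end
end
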